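/- arXiv:0805.4631 — 4 statements merged into one kernel-verified Lean document; each statement's English description precedes it below -/
import Mathlib

section
/- Let r ≥ 1, l_1,…,l_r and d_1,…,d_r positive integers, m_1,…,m_r integers, and p_1,…,p_r integers. Suppose J ⊆ {1,…,r} is a nonempty subset of maximum cardinality among those satisfying p_k + m_k + l_k - l_J·d_k < 0 for all k ∈ J (where l_J = ∑_{j∈J} l_j). Then for every k ∉ J one has p_k + m_k - l_J·d_k ≥ 0. -/
open Finset

section Deficient

variable {ι R : Type*} [CommRing R] [LinearOrder R] [IsStrictOrderedRing R] (l d m p : ι → R)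

def IsDeficient (J : Finset ι) : Prop :=
  ∀ k ∈ J, p k + m k + l k - (∑ j ∈ J, l j) * d k < 0

variable {l d m p}

/-- Adjoining `k` raises `l_J` by `l k ≥ 0`, which only lowers the old quantities, while the new
one equals `(p k + m k - l_J d k) - l k (d k - 1)`. -/
theorem IsDeficient.insert [DecidableEq ι] {J : Finset ι} {k : ι} (hJ : IsDeficient l d m p J)
    (hk : k ∉ J) (hlk : 0 ≤ l k) (hd : ∀ j, 1 ≤ d j)
    (hneg : p k + m k - (∑ j ∈ J, l j) * d k < 0) :
    IsDeficient l d m p (insert k J) := by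
  intro j hj
  rw [sum_insert hk]
  rcases mem_insert.mp hj with rfl | hjJ
  · nlinarith [hd j]
  · nlinarith [hJ j hjJ, hd j]

end Deficient

theorem stmt_1_general (r : ℕ) (l d m p : Fin r → ℤ)
    (hl : ∀ k, 1 ≤ l k) (hd : ∀ k, 1 ≤ d k)
    (J : Finset (Fin r))
    (hneg : ∀ k ∈ J, p k + m k + l k - (∑ j ∈ J, l j) * d k < 0)
    (hmax : ∀ J' : Finset (Fin r), J'.Nonempty →
      (∀ k ∈ J', p k + m k + l k - (∑ j ∈ J', l j) * d k < 0) → J'.card ≤ J.card) :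
    ∀ k, k ∉ J → 0 ≤ p k + m k - (∑ j ∈ J, l j) * d k := by
  intro k hk
  by_contra! hk_neg
  have hins : IsDeficient l d m p (insert k J) :=
    IsDeficient.insert hneg hk (zero_le_one.trans (hl k)) hd hk_neg
  have hcard := hmax (insert k J) (insert_nonempty k J) hins
  rw [card_insert_of_notMem hk] at hcard
  omega

/-- Key step in the proof of Theorem 1.2: if `J` has maximum cardinality among
nonempty subsets where all the quantities `p k + m k + l k - l_J * d k` are negative,
then for every `k ∉ J` we have `p k + m k - l_J * d k ≥ 0`. -/
theorem stmt_1 (r : ℕ) (hr : 1 ≤ r) (l d m p : Fin r → ℤ)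
    (hl : ∀ k, 1 ≤ l k) (hd : ∀ k, 1 ≤ d k)
    (J : Finset (Fin r)) (hJ : J.Nonempty)
    (hneg : ∀ k ∈ J, p k + m k + l k - (∑ j ∈ J, l j) * d k < 0)
    (hmax : ∀ J' : Finset (Fin r), J'.Nonempty →
      (∀ k ∈ J', p k + m k + l k - (∑ j ∈ J', l j) * d k < 0) → J'.card ≤ J.card) :
    ∀ k, k ∉ J → 0 ≤ p k + m k - (∑ j ∈ J, l j) * d k :=
  stmt_1_general r l d m p hl hd J hneg hmax
end

section
/- Fix r ≥ 1, positive integers l_1,…,l_r, d_1,…,d_r and integers m_1,…,m_r. Define Reg ⊆ ℤ^r as the set of tuples (p_1,…,p_r) such that for every nonempty J ⊆ {1,…,r} there exists k ∈ J with p_k + m_k + l_k - l_J·d_k ≥ 0, where l_J = ∑_{j∈J} l_j. For each permutation σ of {1,…,r} and each k, let J(σ,k) = {σ(i) : i ≥ σ^{-1}(k)} and define p_σ ∈ ℤ^r by (p_σ)_k = -m_k - l_k + l_{J(σ,k)}·d_k. Then Reg = ⋃_{σ ∈ S_r} (p_σ + ℕ^r), where p_σ + ℕ^r = {p ∈ ℤ^r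 : p_k ≥ (p_σ)_k for all k}. -/
/-! Ordering the conditions greedily: pick a `k₁` witnessing the condition for `J = {1,…,r}`,
then a `k₂` witnessing it for `J ∖ {k₁}`, and so on. The resulting permutation `σ` has
`J(σ, kᵢ) = {kᵢ, kᵢ₊₁, …}`, so `p ∈ p_σ + ℕ^r`. Conversely, if `p ∈ p_σ + ℕ^r` and `J` is nonempty,
the `σ`-first element `k` of `J` satisfies `J ⊆ J(σ, k)`, and since `l, d ≥ 0` the condition for
`k` only weakens as the set shrinks. -/

open Finset

/-- The index set `J(σ,k) = {σ(i) : i ≥ σ⁻¹(k)}`. -/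
def Jset {r : ℕ} (σ : Equiv.Perm (Fin r)) (k : Fin r) : Finset (Fin r) :=
  (Finset.univ.filter (fun i => σ.symm k ≤ i)).image σ

/-- The translate basepoint `p_σ`, with `(p_σ)_k = -m_k - l_k + l_{J(σ,k)} d_k`. -/
def pSigma {r : ℕ} (l d m : Fin r → ℤ) (σ : Equiv.Perm (Fin r)) (k : Fin r) : ℤ :=
  -m k - l k + (∑ j ∈ Jset σ k, l j) * d k

theorem mem_Jset_iff {r : ℕ} {σ : Equiv.Perm (Fin r)} {k j : Fin r} :
    j ∈ Jset σ k ↔ σ.symm k ≤ σ.symm j := by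
  simp only [Jset, mem_image, mem_filter, mem_univ, true_and]
  exact ⟨fun ⟨i, hi, hij⟩ => hij ▸ by simpa using hi, fun h => ⟨σ.symm j, h, σ.apply_symm_apply j⟩⟩

theorem Jset_apply {r : ℕ} (σ : Equiv.Perm (Fin r)) (i : Fin r) :
    Jset σ (σ i) = (univ.filter (i ≤ ·)).image σ := by
  simp [Jset]

theorem exists_nodup_list_forall_drop {α : Type*} [DecidableEq α] {P : α → Finset α → Prop}
    (h : ∀ J : Finset α, J.Nonempty → ∃ k ∈ J, P k J) (S : Finset α) :
    ∃ L : List α, L.Nodup ∧ L.toFinset = S ∧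
      ∀ i (hi : i < L.length), P L[i] (L.drop i).toFinset := by
  induction S using Finset.strongInduction with
  | H S ih =>
    rcases S.eq_empty_or_nonempty with rfl | hS
    · exact ⟨[], List.nodup_nil, rfl, by simp⟩
    obtain ⟨k, hk, hPk⟩ := h S hS
    obtain ⟨L, hnd, hL, hP⟩ := ih (S.erase k) (erase_ssubset hk)
    have hkL : k ∉ L := fun hmem => notMem_erase k S (hL ▸ List.mem_toFinset.mpr hmem)
    refine ⟨k :: L, List.nodup_cons.mpr ⟨hkL, hnd⟩, ?_, ?_⟩
    · rw [List.toFinset_cons, hL, insert_erase hk]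
    · rintro (_ | i) hi
      · simpa [hL, insert_erase hk] using hPk
      · exact hP i (by simpa using hi)

theorem exists_perm_forall_Jset {r : ℕ} {P : Fin r → Finset (Fin r) → Prop}
    (h : ∀ J : Finset (Fin r), J.Nonempty → ∃ k ∈ J, P k J) :
    ∃ σ : Equiv.Perm (Fin r), ∀ k, P k (Jset σ k) := by
  obtain ⟨L, hnd, hL, hP⟩ := exists_nodup_list_forall_drop h univ
  have hmem : ∀ x, x ∈ L := fun x => List.mem_toFinset.mp (hL ▸ mem_univ x)
  have hlen : L.length = r := by
    simpa [hL] using (List.toFinset_card_of_nodup hnd).symm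
  let σ : Equiv.Perm (Fin r) := (finCongr hlen.symm).trans (hnd.getEquivOfForallMemList L hmem)
  have hσ : ∀ i : Fin r, σ i = L[(i : ℕ)] := fun i => rfl
  refine ⟨σ, fun k => ?_⟩
  obtain ⟨i, rfl⟩ := σ.surjective k
  have hdrop : Jset σ (σ i) = (L.drop i).toFinset := by
    ext x
    rw [Jset_apply]
    simp only [mem_image, mem_filter, mem_univ, true_and, List.mem_toFinset,
      List.mem_drop_iff_getElem, hσ]
    constructor
    · rintro ⟨j, hij, rfl⟩
      exact ⟨j - i, by omega, by congr 1; omega⟩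
    · rintro ⟨j, hj, rfl⟩
      exact ⟨⟨i + j, by omega⟩, by simp [Fin.le_def], rfl⟩
  rw [hdrop, hσ]
  exact hP i (by omega)

theorem exists_mem_of_forall_Jset {r : ℕ} {P : Fin r → Finset (Fin r) → Prop}
    (hP : ∀ k {J J'}, J ⊆ J' → P k J' → P k J) {σ : Equiv.Perm (Fin r)}
    (hσ : ∀ k, P k (Jset σ k)) {J : Finset (Fin r)} (hJ : J.Nonempty) : ∃ k ∈ J, P k J := by
  obtain ⟨k, hk, hmin⟩ := J.exists_min_image σ.symm hJ
  exact ⟨k, hk, hP k (fun j hj => mem_Jset_iff.mpr (hmin j hj)) (hσ k)⟩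

theorem stmt_2_general (r : ℕ) (l d m : Fin r → ℤ)
    (hl : ∀ k, 1 ≤ l k) (hd : ∀ k, 1 ≤ d k) :
    {p : Fin r → ℤ | ∀ J : Finset (Fin r), J.Nonempty →
        ∃ k ∈ J, 0 ≤ p k + m k + l k - (∑ j ∈ J, l j) * d k} =
      ⋃ σ : Equiv.Perm (Fin r),
        {p : Fin r → ℤ | ∀ k, pSigma l d m σ k ≤ p k} := by
  ext p
  have hpSigma : ∀ σ k, pSigma l d m σ k ≤ p k ↔
      0 ≤ p k + m k + l k - (∑ j ∈ Jset σ k, l j) * d k := by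
    intro σ k
    rw [pSigma]
    omega
  simp only [Set.mem_ofPred_eq, Set.mem_iUnion, hpSigma]
  refine ⟨exists_perm_forall_Jset, fun ⟨σ, hσ⟩ J hJ => exists_mem_of_forall_Jset
    (P := fun k J => 0 ≤ p k + m k + l k - (∑ j ∈ J, l j) * d k) ?_ hσ hJ⟩
  intro k J J' hJJ' hJ'
  have hsum : ∑ j ∈ J, l j ≤ ∑ j ∈ J', l j :=
    sum_le_sum_of_subset_of_nonneg hJJ' fun j _ _ => by linarith [hl j]
  nlinarith [hd k]

/-- Proposition 1.3: the regularity set is the union of the `r!` translates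
`p_σ + ℕ^r` over permutations `σ`. -/
theorem stmt_2 (r : ℕ) (hr : 1 ≤ r) (l d m : Fin r → ℤ)
    (hl : ∀ k, 1 ≤ l k) (hd : ∀ k, 1 ≤ d k) :
    {p : Fin r → ℤ | ∀ J : Finset (Fin r), J.Nonempty →
        ∃ k ∈ J, 0 ≤ p k + m k + l k - (∑ j ∈ J, l j) * d k} =
      ⋃ σ : Equiv.Perm (Fin r),
        {p : Fin r → ℤ | ∀ k, pSigma l d m σ k ≤ p k} :=
  stmt_2_general r l d m hl hd
end

section
/- Fix r ≥ 1 and positive integers l_1,…,l_r, d_1,…,d_r. For m ∈ ℤ^r define R(m) = max over nonempty J ⊆ {1,…,r} of min_{k∈J} ( l_J - ⌊(m_k + l_k)/d_k⌋ ), where l_J = ∑_{j∈J} l_j and ⌊·⌋ denotes the floor of a rational number. Then for all m, m' ∈ ℤ^r: R(m) + R(m') ≥ R(m + m'). -/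
/-!
For nonempty `J`, let `a`, `b`, `c` be the floor vectors of `m`, `m'`, `m + m'` and pick `k ∈ J`
maximising `a + b`. Split `J` into `J₁ = {j : a j ≤ a k}` and `J₂ = {k} ∪ {j : a j > a k}`; on `J₂`
maximality gives `b j ≤ b k`. Hence `R(m) + R(m') ≥ (l_{J₁} - a k) + (l_{J₂} - b k)
= l_J + l_k - a k - b k`, and `a k + b k ≤ c k + l_k` (from `⌊x⌋ + ⌊y⌋ ≤ ⌊x + y⌋` and
`l_k / d_k ≤ l_k`) bounds this below by `l_J - c k ≥ min_{j ∈ J} (l_J - c j)`.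
-/

open Finset

/-- `min_{k ∈ J} f k` (junk value `0` if `J = ∅`; only used for nonempty `J`). -/
def minOver {r : ℕ} (J : Finset (Fin r)) (f : Fin r → ℤ) : ℤ :=
  if h : J.Nonempty then J.inf' h f else 0

/-- The finset of nonempty subsets of `{1,…,r}`. -/
def neSubsets (r : ℕ) : Finset (Finset (Fin r)) :=
  Finset.univ.powerset.filter Finset.Nonempty

theorem neSubsets_nonempty {r : ℕ} (hr : 1 ≤ r) : (neSubsets r).Nonempty :=
  ⟨Finset.univ, by
    simp only [neSubsets, Finset.mem_filter, Finset.mem_powerset]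
    exact ⟨Finset.Subset.refl _, ⟨⟨0, hr⟩, Finset.mem_univ _⟩⟩⟩

/-- `max` over nonempty subsets `J ⊆ {1,…,r}` of `min_{k ∈ J} f J k`. -/
def maxMin {r : ℕ} (hr : 1 ≤ r) (f : Finset (Fin r) → Fin r → ℤ) : ℤ :=
  (neSubsets r).sup' (neSubsets_nonempty hr) (fun J => minOver J (f J))

theorem Int.floor_add_div_add_floor_add_div_le {K : Type*} [Field K] [LinearOrder K]
    [IsStrictOrderedRing K] [FloorRing K] (x y : K) {l : ℤ} {d : K} (hl : 0 ≤ l) (hd : 1 ≤ d) :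
    ⌊(x + l) / d⌋ + ⌊(y + l) / d⌋ ≤ ⌊(x + y + l) / d⌋ + l := by
  have hl_div : (l : K) / d ≤ l := div_le_self (by exact_mod_cast hl) hd
  calc ⌊(x + l) / d⌋ + ⌊(y + l) / d⌋
      ≤ ⌊(x + l) / d + (y + l) / d⌋ := Int.le_floor_add _ _
    _ = ⌊(x + y + l) / d + l / d⌋ := by ring_nf
    _ ≤ ⌊(x + y + l) / d + l⌋ := Int.floor_mono (by linarith)
    _ = ⌊(x + y + l) / d⌋ + l := Int.floor_add_intCast _ _

theorem Finset.exists_pivot_split {ι : Type*} [DecidableEq ι] {J : Finset ι}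
    (hJ : J.Nonempty) (a b l : ι → ℤ) :
    ∃ k ∈ J, ∃ J₁ J₂ : Finset ι, k ∈ J₁ ∧ k ∈ J₂ ∧
      (∀ j ∈ J₁, a j ≤ a k) ∧ (∀ j ∈ J₂, b j ≤ b k) ∧
      ∑ j ∈ J₁, l j + ∑ j ∈ J₂, l j = ∑ j ∈ J, l j + l k := by
  obtain ⟨k, hkJ, hk_max⟩ := J.exists_max_image (fun j => a j + b j) hJ
  have hk_not_mem : k ∉ J.filter (fun j => ¬a j ≤ a k) := by simp
  refine ⟨k, hkJ, J.filter (fun j => a j ≤ a k), insert k (J.filter (fun j => ¬a j ≤ a k)),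
    mem_filter.2 ⟨hkJ, le_rfl⟩, mem_insert_self _ _, fun j hj => (mem_filter.1 hj).2, ?_, ?_⟩
  · intro j hj
    rcases mem_insert.1 hj with rfl | hj
    · exact le_rfl
    · obtain ⟨hjJ, hja⟩ := mem_filter.1 hj
      linarith [hk_max j hjJ, not_le.1 hja]
  · rw [sum_insert hk_not_mem, ← sum_filter_add_sum_filter_not J (fun j => a j ≤ a k) l]
    ring

section maxMin

variable {r : ℕ} (hr : 1 ≤ r) {f : Finset (Fin r) → Fin r → ℤ}

theorem le_maxMin {J : Finset (Fin r)} (hJ : J.Nonempty) {t : ℤ} (h : ∀ k ∈ J, t ≤ f J k) :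
    t ≤ maxMin hr f := by
  refine le_trans ?_ (le_sup' (fun J => minOver J (f J)) (by simpa [neSubsets] using hJ))
  rw [minOver, dif_pos hJ]
  exact le_inf' hJ _ h

theorem maxMin_le {t : ℤ} (h : ∀ J : Finset (Fin r), J.Nonempty → ∃ k ∈ J, f J k ≤ t) :
    maxMin hr f ≤ t := by
  refine sup'_le _ _ fun J hJ => ?_
  have hJ : J.Nonempty := by simpa [neSubsets] using hJ
  obtain ⟨k, hkJ, hk⟩ := h J hJ
  rw [minOver, dif_pos hJ]
  exact (inf'_le _ hkJ).trans hk

theorem maxMin_sum_sub_le_add (l a b c : Fin r → ℤ) (h : ∀ k, a k + b k ≤ c k + l k) :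
    maxMin hr (fun J k => ∑ j ∈ J, l j - c k) ≤
      maxMin hr (fun J k => ∑ j ∈ J, l j - a k) + maxMin hr (fun J k => ∑ j ∈ J, l j - b k) := by
  refine maxMin_le hr fun J hJ => ?_
  obtain ⟨k, hkJ, J₁, J₂, hk₁, hk₂, ha, hb, hsum⟩ := J.exists_pivot_split hJ a b l
  have hR₁ : ∑ j ∈ J₁, l j - a k ≤ maxMin hr (fun J k => ∑ j ∈ J, l j - a k) :=
    le_maxMin hr ⟨k, hk₁⟩ fun j hj => by linarith [ha j hj]
  have hR₂ : ∑ j ∈ J₂, l j - b k ≤ maxMin hr (fun J k => ∑ j ∈ J, l j - b k) :=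
    le_maxMin hr ⟨k, hk₂⟩ fun j hj => by linarith [hb j hj]
  exact ⟨k, hkJ, by linarith [h k]⟩

end maxMin

/-- Theorem 2.2 (combinatorial form): subadditivity of the regularity
`R(m) = max_{J ≠ ∅} min_{k∈J}(l_J - ⌊(m_k + l_k)/d_k⌋)`. -/
theorem stmt_9 (r : ℕ) (hr : 1 ≤ r) (l d : Fin r → ℤ)
    (hl : ∀ k, 1 ≤ l k) (hd : ∀ k, 1 ≤ d k) (m m' : Fin r → ℤ) :
    maxMin hr (fun J k =>
        (∑ j ∈ J, l j) - ⌊((m k + m' k + l k : ℤ) : ℚ) / ((d k : ℤ) : ℚ)⌋) ≤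
      maxMin hr (fun J k =>
          (∑ j ∈ J, l j) - ⌊((m k + l k : ℤ) : ℚ) / ((d k : ℤ) : ℚ)⌋) +
        maxMin hr (fun J k =>
          (∑ j ∈ J, l j) - ⌊((m' k + l k : ℤ) : ℚ) / ((d k : ℤ) : ℚ)⌋) := by
  refine maxMin_sum_sub_le_add hr l _ _ _ fun k => ?_
  push_cast
  exact Int.floor_add_div_add_floor_add_div_le _ _ (by linarith [hl k])
    (by exact_mod_cast hd k)
end

section
/- Fix r ≥ 1 and positive integers l_1,…,l_r, d_1,…,d_r, and integers m, m' ∈ ℤ^r. Define Reg(m) = {p ∈ ℤ^r : for every nonempty J ⊆ {1,…,r} there exists k ∈ J with p_k + m_k + l_k - l_J·d_k ≥ 0}. Then Reg(m) + Reg(m') ⊆ Reg(m + m'), i.e., if p ∈ Reg(m) and p' ∈ Reg(m') then p + p' ∈ Reg(m + m'). -/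
/-!
Testing membership of `p'` in `Reg(m')` on the singleton `{k}` gives
`p'ₖ + m'ₖ ≥ lₖ (dₖ - 1) ≥ 0`, so adding `p' + m'` to the witness `k ∈ J` for `p ∈ Reg(m)`
keeps it a witness for `p + p' ∈ Reg(m + m')`.
-/

open Finset

open scoped Pointwise

section Regularity

variable {ι R : Type*} [CommRing R] [LinearOrder R] [IsStrictOrderedRing R]

def regularitySet (l d m : ι → R) : Set (ι → R) :=
  {q | ∀ J : Finset ι, J.Nonempty → ∃ k ∈ J, 0 ≤ q k + m k + l k - (∑ j ∈ J, l j) * d k}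

theorem le_of_mem_regularitySet {l d m q : ι → R} (hq : q ∈ regularitySet l d m) (k : ι) :
    l k * (d k - 1) ≤ q k + m k := by
  obtain ⟨k', hk', h⟩ := hq {k} (singleton_nonempty k)
  rw [mem_singleton] at hk'
  subst hk'
  rw [sum_singleton] at h
  linarith

theorem regularitySet_add_subset {l d m m' : ι → R} (hl : ∀ k, 0 ≤ l k) (hd : ∀ k, 1 ≤ d k) :
    regularitySet l d m + regularitySet l d m' ⊆ regularitySet l d (m + m') := by
  rintro _ ⟨p, hp, p', hp', rfl⟩ J hJ
  obtain ⟨k, hk, h⟩ := hp J hJ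
  have h' := le_of_mem_regularitySet hp' k
  have hlk : 0 ≤ l k * (d k - 1) := mul_nonneg (hl k) (sub_nonneg.2 (hd k))
  refine ⟨k, hk, ?_⟩
  simp only [Pi.add_apply]
  linarith

end Regularity

theorem stmt_19_general (r : ℕ) (l d : Fin r → ℤ)
    (hl : ∀ k, 1 ≤ l k) (hd : ∀ k, 1 ≤ d k) (m m' : Fin r → ℤ)
    (p p' : Fin r → ℤ)
    (hp : p ∈ {q : Fin r → ℤ | ∀ J : Finset (Fin r), J.Nonempty →
      ∃ k ∈ J, 0 ≤ q k + m k + l k - (∑ j ∈ J, l j) * d k})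
    (hp' : p' ∈ {q : Fin r → ℤ | ∀ J : Finset (Fin r), J.Nonempty →
      ∃ k ∈ J, 0 ≤ q k + m' k + l k - (∑ j ∈ J, l j) * d k}) :
    p + p' ∈ {q : Fin r → ℤ | ∀ J : Finset (Fin r), J.Nonempty →
      ∃ k ∈ J, 0 ≤ q k + (m k + m' k) + l k - (∑ j ∈ J, l j) * d k} :=
  regularitySet_add_subset (fun k => zero_le_one.trans (hl k)) hd
    (Set.add_mem_add hp hp')

/-- Theorem 2.1 restated via regularity sets: `Reg(m) + Reg(m') ⊆ Reg(m + m')`. -/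
theorem stmt_19 (r : ℕ) (hr : 1 ≤ r) (l d : Fin r → ℤ)
    (hl : ∀ k, 1 ≤ l k) (hd : ∀ k, 1 ≤ d k) (m m' : Fin r → ℤ)
    (p p' : Fin r → ℤ)
    (hp : p ∈ {q : Fin r → ℤ | ∀ J : Finset (Fin r), J.Nonempty →
      ∃ k ∈ J, 0 ≤ q k + m k + l k - (∑ j ∈ J, l j) * d k})
    (hp' : p' ∈ {q : Fin r → ℤ | ∀ J : Finset (Fin r), J.Nonempty →
      ∃ k ∈ J, 0 ≤ q k + m' k + l k - (∑ j ∈ J, l j) * d k}) :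
    p + p' ∈ {q : Fin r → ℤ | ∀ J : Finset (Fin r), J.Nonempty →
      ∃ k ∈ J, 0 ≤ q k + (m k + m' k) + l k - (∑ j ∈ J, l j) * d k} :=
  stmt_19_general r l d hl hd m m' p p' hp hp'
end
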